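/- Let I be an Ising category, with Irr(I) = {1, δ, X}, fusion rules δ⊗δ = 1, δ⊗X = X⊗δ = X, X⊗X = 1⊕δ. Then every faithful G-extension C = ⊕_{g∈G} C_g of I is a slightly trivial extension of I: every component C_g contains an invertible simple object. -/

import Mathlib

open scoped BigOperators
open Real

/-- A fusion ring: the Grothendieck-ring data of a fusion category, with basis `I`
(the isomorphism classes of simple objects), fusion multiplicities `N`, unit,
duality, and Frobenius–Perron dimensions `d`. -/
structure FusionRing (I : Type) [Fintype I] [DecidableEq I] where
  N : I → I → I → ℕ
  one : I
  dual : I → I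
  d : I → ℝ
  d_one : d one = 1
  one_le_d : ∀ i, 1 ≤ d i
  dual_dual : ∀ i, dual (dual i) = i
  d_dual : ∀ i, d (dual i) = d i
  d_mul : ∀ i j, d i * d j = ∑ k, (N i j k : ℝ) * d k
  N_one_left : ∀ i k, N one i k = if k = i then 1 else 0
  N_one_right : ∀ i k, N i one k = if k = i then 1 else 0
  N_unit : ∀ i j, N i j one = if j = dual i then 1 else 0
  assoc : ∀ i j k l, ∑ m, N i j m * N m k l = ∑ m, N j k m * N i m l

/-- A faithfully `G`-graded fusion ring: the Grothendieck data of a faithful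
`G`-extension `C = ⊕_{g ∈ G} C_g` of the fusion category `D = C_e`. -/
structure GradedFusionRing (G : Type) [Group G] [Fintype G] [DecidableEq G]
    (I : Type) [Fintype I] [DecidableEq I] extends FusionRing I where
  deg : I → G
  deg_one : deg one = 1
  deg_mul : ∀ i j k, N i j k ≠ 0 → deg k = deg i * deg j
  faithful : Function.Surjective deg

/-! Multiplying by a simple `a` of degree `h` maps the component `C_g` to `C_{hg}` and
scales `∑_{i ∈ C_g} d_i²` by `d_a`, so by faithfulness every component has dimension
`FPdim(I) = 4`. A non-invertible simple has `d² = d(i ⊗ i*) ≥ 2`, so a component without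
invertibles consists of simples of one common dimension `c`: either one simple with `c = 2`
or two with `c = √2`. Then `X ⊗ -` preserves that component and `d_X · c = n · c` with
`n ∈ ℕ`, contradicting `d_X = √2`. -/

open Finset

namespace FusionRing

variable {I : Type} [Fintype I] [DecidableEq I] (R : FusionRing I)

lemma d_pos (i : I) : 0 < R.d i := one_pos.trans_le (R.one_le_d i)

lemma N_cyclic (i j k : I) : R.N i j (R.dual k) = R.N j k (R.dual i) := by
  have h := R.assoc i j k R.one
  have hk : ∀ m, R.N m k R.one = if m = R.dual k then 1 else 0 := fun m => by
    rw [R.N_unit]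
    exact if_congr ⟨fun h => by rw [h, R.dual_dual], fun h => by rw [h, R.dual_dual]⟩ rfl rfl
  simpa only [hk, R.N_unit, mul_ite, mul_one, mul_zero, sum_ite_eq', mem_univ, if_true] using h

lemma N_eq_N_dual (a i k : I) : R.N a i k = R.N (R.dual k) a (R.dual i) := by
  have h := R.N_cyclic a i (R.dual k)
  rw [R.dual_dual] at h
  rw [h, R.N_cyclic]

/-- Frobenius reciprocity turns the sum over the middle index into `d (k* ⊗ a)`. -/
lemma sum_N_mul_d_middle (a k : I) : ∑ i, (R.N a i k : ℝ) * R.d i = R.d a * R.d k := by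
  calc ∑ i, (R.N a i k : ℝ) * R.d i
      = ∑ i, (R.N (R.dual k) a (R.dual i) : ℝ) * R.d (R.dual i) := by
        simp only [← R.N_eq_N_dual, R.d_dual]
    _ = ∑ m, (R.N (R.dual k) a m : ℝ) * R.d m :=
        Fintype.sum_equiv (Function.Involutive.toPerm _ R.dual_dual) _ _ fun _ => rfl
    _ = R.d a * R.d k := by rw [← R.d_mul, R.d_dual, mul_comm]

/-- `d_i² = d(i ⊗ i*) = 1 + ∑_{k ≠ 1} N_{i i*}^k d_k`, and each nonzero term is at least `1`. -/
lemma two_le_d_sq_of_ne_one {i : I} (hi : R.d i ≠ 1) : 2 ≤ R.d i ^ 2 := by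
  set f : I → ℝ := fun k => (R.N i (R.dual i) k : ℝ) * R.d k
  have hf : 0 ≤ f := fun k => mul_nonneg (Nat.cast_nonneg _) (R.d_pos k).le
  have hsq : R.d i ^ 2 = 1 + ∑ k ∈ univ.erase R.one, f k := by
    have h := R.d_mul i (R.dual i)
    rw [R.d_dual, ← add_sum_erase _ _ (mem_univ R.one)] at h
    simpa [f, sq, R.N_unit, R.d_one] using h
  by_cases h : ∃ k ∈ univ.erase R.one, R.N i (R.dual i) k ≠ 0
  · obtain ⟨k, hk, hN⟩ := h
    have hfk : 1 ≤ f k :=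
      one_le_mul_of_one_le_of_one_le (by exact_mod_cast Nat.one_le_iff_ne_zero.mpr hN)
        (R.one_le_d k)
    linarith [single_le_sum (fun j _ => hf j) hk]
  · push Not at h
    refine absurd ?_ hi
    have hsq1 : R.d i ^ 2 = 1 ^ 2 := by
      rw [hsq, sum_eq_zero fun k hk => by simp [f, h k hk], one_pow, add_zero]
    exact (pow_left_inj₀ (R.d_pos i).le zero_le_one two_ne_zero).mp hsq1

end FusionRing

namespace GradedFusionRing

variable {G I : Type} [Group G] [Fintype G] [DecidableEq G] [Fintype I] [DecidableEq I]
  (R : GradedFusionRing G I)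

def component (g : G) : Finset I := univ.filter fun i => R.deg i = g

def componentDim (g : G) : ℝ := ∑ i ∈ R.component g, R.d i ^ 2

@[simp]
lemma mem_component {g : G} {i : I} : i ∈ R.component g ↔ R.deg i = g := by
  simp [component]

lemma sum_component_N_mul (a b : I) (f : I → ℝ) :
    ∑ k ∈ R.component (R.deg a * R.deg b), (R.N a b k : ℝ) * f k
      = ∑ k, (R.N a b k : ℝ) * f k := by
  refine sum_subset (subset_univ _) fun k _ hk => ?_
  rw [R.mem_component] at hk
  rw [show R.N a b k = 0 from by_contra fun h => hk (R.deg_mul a b k h), Nat.cast_zero, zero_mul]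

lemma d_mul_componentDim (a : I) (g : G) :
    R.d a * R.componentDim (R.deg a * g) = R.d a * R.componentDim g := by
  calc R.d a * R.componentDim (R.deg a * g)
      = ∑ k ∈ R.component (R.deg a * g), ∑ i, (R.N a i k : ℝ) * R.d i * R.d k := by
        simp only [componentDim, mul_sum, ← sum_mul, R.sum_N_mul_d_middle]
        exact sum_congr rfl fun _ _ => by ring
    _ = ∑ k ∈ R.component (R.deg a * g), ∑ i ∈ R.component g,
          (R.N a i k : ℝ) * R.d i * R.d k := by
        refine sum_congr rfl fun k hk => (sum_subset (subset_univ _) fun i _ hi => ?_).symm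
        rw [R.mem_component] at hk hi
        have hN : R.N a i k = 0 := by_contra fun hN =>
          hi (mul_left_cancel ((R.deg_mul a i k hN).symm.trans hk))
        rw [hN, Nat.cast_zero, zero_mul, zero_mul]
    _ = ∑ i ∈ R.component g, R.d i * ∑ k ∈ R.component (R.deg a * R.deg i),
          (R.N a i k : ℝ) * R.d k := by
        rw [sum_comm]
        refine sum_congr rfl fun i hi => ?_
        rw [(R.mem_component).mp hi, mul_sum]
        exact sum_congr rfl fun _ _ => by ring
    _ = R.d a * R.componentDim g := by
        simp only [sum_component_N_mul, ← R.d_mul, componentDim, mul_sum]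
        exact sum_congr rfl fun _ _ => by ring

lemma componentDim_eq_componentDim_one (g : G) : R.componentDim g = R.componentDim 1 := by
  obtain ⟨a, rfl⟩ := R.faithful g
  have h := R.d_mul_componentDim a 1
  rwa [mul_one, mul_right_inj' (R.d_pos a).ne'] at h

lemma d_eq_sum_N_of_d_const_on_component {a i : I} (ha : R.deg a = 1)
    (hconst : ∀ k ∈ R.component (R.deg i), R.d k = R.d i) :
    R.d a = ((∑ k, R.N a i k : ℕ) : ℝ) := by
  have hterm : ∀ k, (R.N a i k : ℝ) * R.d k = (R.N a i k : ℝ) * R.d i := fun k => by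
    by_cases hN : R.N a i k = 0
    · simp [hN]
    · rw [hconst k (by rw [R.mem_component, R.deg_mul a i k hN, ha, one_mul])]
  refine mul_right_cancel₀ (R.d_pos i).ne' ?_
  rw [R.d_mul, Finset.sum_congr rfl fun k _ => hterm k, ← sum_mul, Nat.cast_sum]

end GradedFusionRing

lemma eq_of_two_le_sq_of_sum_sq_le_four {ι : Type*} {s : Finset ι} {f : ι → ℝ}
    (hpos : ∀ k ∈ s, 0 < f k) (htwo : ∀ k ∈ s, 2 ≤ f k ^ 2) (hsum : ∑ k ∈ s, f k ^ 2 ≤ 4)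
    {j k : ι} (hj : j ∈ s) (hk : k ∈ s) : f j = f k := by
  classical
  by_cases hjk : j = k
  · rw [hjk]
  have hpair : f j ^ 2 + f k ^ 2 ≤ 4 := by
    refine le_trans ?_ hsum
    rw [← sum_pair (f := fun i => f i ^ 2) hjk]
    exact sum_le_sum_of_subset_of_nonneg (insert_subset hj (singleton_subset_iff.mpr hk))
      fun i _ _ => sq_nonneg (f i)
  have hsq : f j ^ 2 = f k ^ 2 := by linarith [htwo j hj, htwo k hk]
  exact (pow_left_inj₀ (hpos j hj).le (hpos k hk).le two_ne_zero).mp hsq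

theorem stmt12_general {G I : Type} [Group G] [Fintype G] [DecidableEq G]
    [Fintype I] [DecidableEq I] (R : GradedFusionRing G I)
    (δ X : I) (hXdeg : R.deg X = 1)
    (hrank : ∀ i : I, R.deg i = 1 → i = R.one ∨ i = δ ∨ i = X)
    (hδδ : ∀ k : I, R.N δ δ k = if k = R.one then 1 else 0)
    (hXX : ∀ k : I, R.N X X k = (if k = R.one then 1 else 0) + (if k = δ then 1 else 0)) :
    ∀ g : G, ∃ δ' : I, R.deg δ' = g ∧ R.d δ' = 1 := by
  intro g
  by_contra! hg
  have hdδ : R.d δ = 1 := by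
    have h := R.d_mul δ δ
    simp only [hδδ, Nat.cast_ite, Nat.cast_one, Nat.cast_zero, ite_mul, one_mul, zero_mul,
      sum_ite_eq', mem_univ, if_true, R.d_one] at h
    nlinarith [R.d_pos δ]
  have hdX : R.d X ^ 2 = 2 := by
    have h := R.d_mul X X
    simp only [hXX, Nat.cast_add, Nat.cast_ite, Nat.cast_one, Nat.cast_zero, add_mul, ite_mul,
      one_mul, zero_mul, sum_add_distrib, sum_ite_eq', mem_univ, if_true, R.d_one, hdδ] at h
    linarith
  have hdim : R.componentDim g ≤ 4 := by
    rw [R.componentDim_eq_componentDim_one]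
    calc R.componentDim 1 ≤ ∑ i ∈ univ.image ![R.one, δ, X], R.d i ^ 2 :=
          sum_le_sum_of_subset_of_nonneg
            (fun i hi => by simpa [Fin.exists_fin_succ, eq_comm] using hrank i (by simpa using hi))
            fun i _ _ => sq_nonneg _
      _ ≤ ∑ n, R.d (![R.one, δ, X] n) ^ 2 := sum_image_le_of_nonneg fun _ _ => sq_nonneg _
      _ = 4 := by simp [Fin.sum_univ_three, R.d_one, hdδ, hdX]; norm_num
  obtain ⟨i, rfl⟩ := R.faithful g
  have hconst : ∀ k ∈ R.component (R.deg i), R.d k = R.d i :=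
    fun k hk => eq_of_two_le_sq_of_sum_sq_le_four (fun j _ => R.d_pos j)
      (fun j hj => R.two_le_d_sq_of_ne_one (hg j ((R.mem_component).mp hj))) hdim hk
      ((R.mem_component).mpr rfl)
  have hXnat := R.d_eq_sum_N_of_d_const_on_component hXdeg hconst
  rw [← Real.sqrt_sq (R.d_pos X).le, hdX] at hXnat
  exact irrational_sqrt_two.ne_nat _ hXnat

/-- if `I` is an Ising category, with `Irr I = {1, δ, X}` and fusion
rules `δ² = 1`, `δX = Xδ = X`, `X² = 1 ⊕ δ`, then every faithful `G`-extension
`C = ⊕_g C_g` of `I` is slightly trivial: every component contains an invertible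
simple object. -/
theorem stmt12 {G I : Type} [Group G] [Fintype G] [DecidableEq G]
    [Fintype I] [DecidableEq I] (R : GradedFusionRing G I)
    (δ X : I) (hδdeg : R.deg δ = 1) (hXdeg : R.deg X = 1)
    (hne1 : δ ≠ R.one) (hne2 : X ≠ R.one) (hne3 : δ ≠ X)
    (hrank : ∀ i : I, R.deg i = 1 → i = R.one ∨ i = δ ∨ i = X)
    (hδδ : ∀ k : I, R.N δ δ k = if k = R.one then 1 else 0)
    (hδX : ∀ k : I, R.N δ X k = if k = X then 1 else 0)
    (hXδ : ∀ k : I, R.N X δ k = if k = X then 1 else 0)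
    (hXX : ∀ k : I, R.N X X k = (if k = R.one then 1 else 0) + (if k = δ then 1 else 0)) :
    ∀ g : G, ∃ δ' : I, R.deg δ' = g ∧ R.d δ' = 1 :=
  stmt12_general R δ X hXdeg hrank hδδ hXX
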